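/- arXiv:2312.10000 — 3 statements merged into one kernel-verified Lean document; each statement's English description precedes it below -/
import Mathlib

section
/- Let λ be a cardinal, p ∈ S^λ, F a finite subset of dom(p), n < ω, and let D ⊆ S^λ be open dense below p. Then there is q ≤_{F,n} p such that q↾σ ∈ D for every σ suitable for p, F and n. -/
/-- A tree on `2`: a set of finite binary sequences closed under initial segments. -/
def IsBinTree (T : Set (List Bool)) : Prop :=
  ∀ s ∈ T, ∀ t : List Bool, t <+: s → t ∈ T

/-- `s` is a splitting node of `T`. -/
def IsSplitNode (T : Set (List Bool)) (s : List Bool) : Prop :=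
  s ∈ T ∧ s ++ [false] ∈ T ∧ s ++ [true] ∈ T

/-- `T` is a perfect tree (a condition of Sacks forcing). -/
def IsPerfectTree (T : Set (List Bool)) : Prop :=
  IsBinTree T ∧ T.Nonempty ∧ ∀ s ∈ T, ∃ t, s <+: t ∧ IsSplitNode T t

/-- `t` is the (unique) minimal splitting node of `T` extending `s`, i.e. `t = sucspl_T(s)`. -/
def IsMinSplit (T : Set (List Bool)) (s t : List Bool) : Prop :=
  IsSplitNode T t ∧ s <+: t ∧ ∀ t', IsSplitNode T t' → s <+: t' → t <+: t'

/-- The `n`-th splitting level `spl_n(T)`. -/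
def splLevel (T : Set (List Bool)) : ℕ → Set (List Bool)
  | 0 => {t | IsMinSplit T [] t}
  | n + 1 => {t | ∃ s ∈ splLevel T n, ∃ i : Bool, IsMinSplit T (s ++ [i]) t}

/-- `S ≤ₙ T` iff `S ⊆ T` and `spl_n(S) = spl_n(T)`. -/
def SacksLeN (S T : Set (List Bool)) (n : ℕ) : Prop :=
  S ⊆ T ∧ splLevel S n = splLevel T n

/-- A condition of the countable support product `S^λ` (over the index type `ι` of size `λ`),
given by its domain `D` and values `f`: the domain is countable and all values on the domain
are perfect trees. -/
def IsCSCond {ι : Type*} (D : Set ι) (f : ι → Set (List Bool)) : Prop :=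
  D.Countable ∧ ∀ α ∈ D, IsPerfectTree (f α)

/-- The ordering of `S^λ`: `(D₁, f₁) ≤ (D₂, f₂)` iff `D₂ ⊆ D₁` and
`f₁ α ⊆ f₂ α` for all `α ∈ D₂`. -/
def CSLe {ι : Type*} (D₁ : Set ι) (f₁ : ι → Set (List Bool))
    (D₂ : Set ι) (f₂ : ι → Set (List Bool)) : Prop :=
  D₂ ⊆ D₁ ∧ ∀ α ∈ D₂, f₁ α ⊆ f₂ α

/-- `p ≤_{F,n} q` iff `p ≤ q` and `p(α) ≤ₙ q(α)` for all `α ∈ F`. -/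
def CSLeFN {ι : Type*} (D₁ : Set ι) (f₁ : ι → Set (List Bool))
    (D₂ : Set ι) (f₂ : ι → Set (List Bool)) (F : Finset ι) (n : ℕ) : Prop :=
  CSLe D₁ f₁ D₂ f₂ ∧ ∀ α ∈ F, SacksLeN (f₁ α) (f₂ α) n


/-- `σ` is suitable for `p = (D, f)`, `F` and `n`:
`σ(α) ∈ spl_n(p(α))⌢2` for every `α ∈ F`. -/
def Suitable {ι : Type*} (f : ι → Set (List Bool)) (F : Finset ι) (n : ℕ)
    (σ : ι → List Bool) : Prop :=
  ∀ α ∈ F, ∃ s ∈ splLevel (f α) n, ∃ i : Bool, σ α = s ++ [i]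

/-- The values of the restricted condition `p↾σ`:
`(p↾σ)(α) = p(α)_{σ(α)}` for `α ∈ F`, and `(p↾σ)(α) = p(α)` otherwise. -/
def restrictVal {ι : Type*} [DecidableEq ι] (f : ι → Set (List Bool)) (F : Finset ι)
    (σ : ι → List Bool) : ι → Set (List Bool) :=
  fun α => if α ∈ F then {t ∈ f α | σ α <+: t ∨ t <+: σ α} else f α

/-!
Only the values of `σ` on `F` matter, and each `σ α` is one of the finitely many immediate
successors of nodes of `spl_n(p(α))`, so there are finitely many `σ`, handled one at a time.
Given `q ≤_{F,n} p`, extend `q↾σ` to some `r ∈ 𝒟` and graft `r` back into `q`: above `σ α` the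
new tree is `r α`, elsewhere it is `q α`. As `σ α` is an immediate successor of an `n`-th
splitting node, no splitting node of level `≤ n` is lost, so the new condition is still
`≤_{F,n} p`. Its restriction to `σ` is `r`, and its restriction to an earlier `τ` lies below
`q↾τ ∈ 𝒟`, hence stays in `𝒟` by openness.
-/

theorem List.exists_fork_of_not_prefix :
    ∀ {s t : List Bool}, ¬ s <+: t → ¬ t <+: s →
      ∃ u b, u ++ [b] <+: s ∧ u ++ [!b] <+: t ∧ ∀ w, w <+: s → w <+: t → w <+: u
  | [], _, hst, _ => absurd List.nil_prefix hst
  | _ :: _, [], _, hts => absurd List.nil_prefix hts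
  | a :: s, c :: t, hst, hts => by
    by_cases hac : a = c
    · subst hac
      obtain ⟨u, b, hus, hut, hmax⟩ :=
        exists_fork_of_not_prefix (mt (List.prefix_cons_inj a).2 hst)
          (mt (List.prefix_cons_inj a).2 hts)
      refine ⟨a :: u, b, by simpa using hus, by simpa using hut, ?_⟩
      rintro (_ | ⟨d, w⟩) hws hwt
      · exact List.nil_prefix
      · exact List.cons_prefix_cons.2 ⟨(List.cons_prefix_cons.1 hws).1,
          hmax w (List.cons_prefix_cons.1 hws).2 (List.cons_prefix_cons.1 hwt).2⟩
    · have hca : c = !a := by cases a <;> cases c <;> simp_all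
      refine ⟨[], a, by simp, by simp [hca], ?_⟩
      rintro (_ | ⟨d, w⟩) hws hwt
      · exact List.nil_prefix
      · exact absurd ((List.cons_prefix_cons.1 hws).1.symm.trans
          (List.cons_prefix_cons.1 hwt).1) hac

section Trees

variable {T B : Set (List Bool)} {s t u : List Bool}

theorem IsMinSplit.unique (h : IsMinSplit T s t) (h' : IsMinSplit T s u) : t = u :=
  (h.2.2 u h'.1 h'.2.1).eq_of_length_le (h'.2.2 t h.1 h.2.1).length_le

theorem IsSplitNode.append_mem (h : IsSplitNode T t) (j : Bool) : t ++ [j] ∈ T := by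
  cases j
  exacts [h.2.1, h.2.2]

theorem isSplitNode_of_mem_splLevel : ∀ {n : ℕ}, t ∈ splLevel T n → IsSplitNode T t
  | 0, h => h.1
  | _ + 1, ⟨_, _, _, h⟩ => h.1

theorem IsPerfectTree.nil_mem (hT : IsPerfectTree T) : [] ∈ T :=
  hT.2.1.elim fun t ht => hT.1 t ht [] List.nil_prefix

theorem IsPerfectTree.exists_long (hT : IsPerfectTree T) (k : ℕ) : ∃ t ∈ T, k ≤ t.length := by
  induction k with
  | zero => exact ⟨[], hT.nil_mem, le_rfl⟩
  | succ k ih =>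
    obtain ⟨t, htT, hlen⟩ := ih
    obtain ⟨w, htw, hw⟩ := hT.2.2 t htT
    refine ⟨w ++ [true], hw.2.2, ?_⟩
    simpa using hlen.trans htw.length_le

/-- A splitting node of minimal length above `s` lies below every splitting node above `s`:
otherwise the two would fork at a shorter splitting node. -/
theorem IsPerfectTree.exists_minSplit (hT : IsPerfectTree T) (hs : s ∈ T) :
    ∃ t, IsMinSplit T s t := by
  classical
  have hex : ∃ k, ∃ t, IsSplitNode T t ∧ s <+: t ∧ t.length = k :=
    (hT.2.2 s hs).elim fun t ht => ⟨_, t, ht.2, ht.1, rfl⟩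
  obtain ⟨t, ht, hst, hlen⟩ := Nat.find_spec hex
  refine ⟨t, ht, hst, fun t' ht' hst' => ?_⟩
  by_contra htt'
  have hmin : ∀ w, IsSplitNode T w → s <+: w → t.length ≤ w.length :=
    fun w hw hsw => hlen ▸ Nat.find_min' hex ⟨w, hw, hsw, rfl⟩
  by_cases ht't : t' <+: t
  · exact htt' (ht't.eq_of_length_le (hmin t' ht' hst') ▸ List.prefix_rfl)
  obtain ⟨u, b, hut, hut', hmax⟩ := List.exists_fork_of_not_prefix htt' ht't
  have hsplit : IsSplitNode T u := by
    have hb := hT.1 t ht.1 _ hut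
    have hb' := hT.1 t' ht'.1 _ hut'
    refine ⟨hT.1 _ hb u (List.prefix_append u [b]), ?_⟩
    cases b
    exacts [⟨hb, hb'⟩, ⟨hb', hb⟩]
  have := hmin u hsplit (hmax s hst hst')
  have := hut.length_le
  simp only [List.length_append, List.length_singleton] at this
  omega

theorem splLevel_finite : ∀ n : ℕ, (splLevel T n).Finite
  | 0 => Set.Subsingleton.finite fun _ ha _ hb => IsMinSplit.unique ha hb
  | n + 1 => by
    refine ((splLevel_finite n).biUnion fun s _ => Set.finite_iUnion fun i =>
      (Set.Subsingleton.finite fun _ ha _ hb => IsMinSplit.unique ha hb :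
        {t | IsMinSplit T (s ++ [i]) t}.Finite)).subset ?_
    rintro t ⟨s, hs, i, h⟩
    exact Set.mem_biUnion hs (Set.mem_iUnion.2 ⟨i, h⟩)

theorem IsMinSplit.prefix_of_isSplitNode (h : IsMinSplit T s t) (hu : IsSplitNode T u)
    (hut : u <+: t) (hne : u ≠ t) : u <+: s ∧ u ≠ s := by
  have hsu : ¬ s <+: u := fun hsu => hne (hut.eq_of_length_le (h.2.2 u hu hsu).length_le)
  refine ⟨(List.prefix_or_prefix_of_prefix hut h.2.1).resolve_right hsu, ?_⟩
  rintro rfl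
  exact hsu List.prefix_rfl

theorem eq_of_prefix_of_mem_splLevel :
    ∀ {m n : ℕ} {s t : List Bool}, m ≤ n → s ∈ splLevel T n → t ∈ splLevel T m → s <+: t → s = t
  | 0, 0, _, _, _, hs, ht, _ => IsMinSplit.unique hs ht
  | 0, _ + 1, _, t, _, ⟨s', hs', i, hs⟩, ht, hst => by
    have h₁ := (ht.2.2 s' (isSplitNode_of_mem_splLevel hs') List.nil_prefix).length_le
    have h₂ := (hs.2.1.trans hst).length_le
    simp only [List.length_append, List.length_singleton] at h₂
    omega
  | _ + 1, 0, _, _, hmn, _, _, _ => absurd hmn (Nat.not_succ_le_zero _)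
  | _ + 1, _ + 1, s, t, hmn, ⟨s', hs', i, hs⟩, ⟨t', ht', j, ht⟩, hst => by
    have hs't : s' ++ [i] <+: t := hs.2.1.trans hst
    have hne : s' ≠ t := by
      rintro rfl
      simpa using hs't.length_le
    obtain ⟨hs't', hne'⟩ := ht.prefix_of_isSplitNode (isSplitNode_of_mem_splLevel hs')
      ((List.prefix_append s' [i]).trans hs't) hne
    have hst' : s' <+: t' := (List.prefix_concat_iff.1 hs't').resolve_left hne'
    obtain rfl := eq_of_prefix_of_mem_splLevel (Nat.le_of_succ_le_succ hmn) hs' ht' hst'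
    obtain rfl : i = j := by
      simpa using List.prefix_of_prefix_length_le hs't ht.2.1 (by simp)
    exact hs.unique ht

theorem IsMinSplit.of_subset (hBT : B ⊆ T) (h : IsMinSplit T s t) (ht : IsSplitNode B t) :
    IsMinSplit B s t :=
  ⟨ht, h.2.1, fun u hu hsu => h.2.2 u ⟨hBT hu.1, hBT hu.2.1, hBT hu.2.2⟩ hsu⟩

theorem isMinSplit_iff_of_subset (hBT : B ⊆ T) (h : IsMinSplit T s t) (ht : IsSplitNode B t) :
    IsMinSplit B s u ↔ IsMinSplit T s u :=
  ⟨fun hu => (h.of_subset hBT ht).unique hu ▸ h, fun hu => h.unique hu ▸ h.of_subset hBT ht⟩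

theorem splLevel_eq_of_subset (hT : IsPerfectTree T) (hBT : B ⊆ T) :
    ∀ {n : ℕ}, (∀ m ≤ n, ∀ t ∈ splLevel T m, IsSplitNode B t) → splLevel B n = splLevel T n
  | 0, hsplit => by
    obtain ⟨t, ht⟩ := hT.exists_minSplit hT.nil_mem
    ext u
    exact isMinSplit_iff_of_subset hBT ht (hsplit 0 le_rfl t ht)
  | n + 1, hsplit => by
    have ih := splLevel_eq_of_subset hT hBT fun m hm => hsplit m (hm.trans n.le_succ)
    ext u
    change (∃ s ∈ splLevel B n, _) ↔ ∃ s ∈ splLevel T n, _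
    rw [ih]
    refine exists_congr fun s => and_congr_right fun hs => exists_congr fun i => ?_
    obtain ⟨t, ht⟩ := hT.exists_minSplit ((isSplitNode_of_mem_splLevel hs).append_mem i)
    exact isMinSplit_iff_of_subset hBT ht (hsplit _ le_rfl t ⟨s, hs, i, ht⟩)

end Trees

def treeRestrict (T : Set (List Bool)) (x : List Bool) : Set (List Bool) :=
  {t ∈ T | x <+: t ∨ t <+: x}

def graft (R T : Set (List Bool)) (x : List Bool) : Set (List Bool) :=
  R ∪ {t ∈ T | ¬ x <+: t}

section Graft

variable {T R : Set (List Bool)} {s x : List Bool}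

theorem treeRestrict_subset : treeRestrict T x ⊆ T :=
  Set.sep_subset _ _

theorem treeRestrict_mono (h : R ⊆ T) : treeRestrict R x ⊆ treeRestrict T x :=
  fun _ ht => ⟨h ht.1, ht.2⟩

theorem IsPerfectTree.restrict (hT : IsPerfectTree T) (hx : x ∈ T) :
    IsPerfectTree (treeRestrict T x) := by
  have above : ∀ w, x <+: w → IsSplitNode T w → IsSplitNode (treeRestrict T x) w :=
    fun w hxw hw => ⟨⟨hw.1, .inl hxw⟩, ⟨hw.2.1, .inl (hxw.trans (List.prefix_append w _))⟩,
      ⟨hw.2.2, .inl (hxw.trans (List.prefix_append w _))⟩⟩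
  refine ⟨?_, ⟨x, hx, .inr List.prefix_rfl⟩, ?_⟩
  · rintro s ⟨hsT, hs⟩ t hts
    refine ⟨hT.1 s hsT t hts, ?_⟩
    rcases hs with h | h
    · exact List.prefix_or_prefix_of_prefix h hts
    · exact .inr (hts.trans h)
  · rintro s ⟨hsT, h | h⟩
    · obtain ⟨w, hsw, hw⟩ := hT.2.2 s hsT
      exact ⟨w, hsw, above w (h.trans hsw) hw⟩
    · obtain ⟨w, hxw, hw⟩ := hT.2.2 x hx
      exact ⟨w, h.trans hxw, above w hxw hw⟩

theorem IsPerfectTree.mem_of_subset_treeRestrict (hR : IsPerfectTree R)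
    (hRx : R ⊆ treeRestrict T x) : x ∈ R := by
  obtain ⟨t, htR, hlen⟩ := hR.exists_long x.length
  rcases (hRx htR).2 with h | h
  · exact hR.1 t htR x h
  · exact h.eq_of_length_le hlen ▸ htR

theorem graft_subset (hRT : R ⊆ T) : graft R T x ⊆ T :=
  Set.union_subset hRT (Set.sep_subset _ _)

theorem IsPerfectTree.graft (hT : IsPerfectTree T) (hR : IsPerfectTree R)
    (hRx : R ⊆ treeRestrict T x) : IsPerfectTree (_root_.graft R T x) := by
  have hxR := hR.mem_of_subset_treeRestrict hRx
  have inR : ∀ w, IsSplitNode R w → IsSplitNode (_root_.graft R T x) w :=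
    fun w hw => ⟨.inl hw.1, .inl hw.2.1, .inl hw.2.2⟩
  refine ⟨?_, ⟨x, .inl hxR⟩, ?_⟩
  · rintro s (hs | ⟨hsT, hxs⟩) t hts
    · exact .inl (hR.1 s hs t hts)
    · exact .inr ⟨hT.1 s hsT t hts, fun hxt => hxs (hxt.trans hts)⟩
  · rintro t (ht | ⟨htT, hxt⟩)
    · obtain ⟨w, htw, hw⟩ := hR.2.2 t ht
      exact ⟨w, htw, inR w hw⟩
    by_cases htx : t <+: x
    · obtain ⟨w, hxw, hw⟩ := hR.2.2 x hxR
      exact ⟨w, htx.trans hxw, inR w hw⟩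
    -- `t` is incomparable with `x`, so the whole cone above `t` is kept from `T`
    have away : ∀ v, t <+: v → ¬ x <+: v := fun v htv hxv =>
      (List.prefix_or_prefix_of_prefix htv hxv).elim htx hxt
    obtain ⟨w, htw, hw⟩ := hT.2.2 t htT
    exact ⟨w, htw, .inr ⟨hw.1, away w htw⟩,
      .inr ⟨hw.2.1, away _ (htw.trans (List.prefix_append w _))⟩,
      .inr ⟨hw.2.2, away _ (htw.trans (List.prefix_append w _))⟩⟩

theorem treeRestrict_graft (hR : IsPerfectTree R) (hRx : R ⊆ treeRestrict T x) :
    treeRestrict (graft R T x) x = R := by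
  ext t
  refine ⟨?_, fun ht => ⟨.inl ht, (hRx ht).2⟩⟩
  rintro ⟨ht | ⟨-, hxt⟩, hcomp⟩
  · exact ht
  · exact hR.1 x (hR.mem_of_subset_treeRestrict hRx) t (hcomp.resolve_left hxt)

theorem splLevel_graft (hT : IsPerfectTree T) (hR : IsPerfectTree R)
    {n : ℕ} (hs : s ∈ splLevel T n) (i : Bool) (hRx : R ⊆ treeRestrict T (s ++ [i])) :
    splLevel (graft R T (s ++ [i])) n = splLevel T n := by
  refine splLevel_eq_of_subset hT (graft_subset (hRx.trans treeRestrict_subset))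
    fun m hm t ht => ?_
  have hst : ¬ s ++ [i] <+: t := fun h => by
    obtain rfl := eq_of_prefix_of_mem_splLevel hm hs ht ((List.prefix_append s _).trans h)
    simpa using h.length_le
  have child : ∀ j, t ++ [j] ∈ graft R T (s ++ [i]) := fun j => by
    by_cases h : s ++ [i] <+: t ++ [j]
    · rw [(List.prefix_concat_iff.1 h).resolve_right hst] at hRx ⊢
      exact .inl (hR.mem_of_subset_treeRestrict hRx)
    · exact .inr ⟨(isSplitNode_of_mem_splLevel ht).append_mem j, h⟩
  exact ⟨.inr ⟨(isSplitNode_of_mem_splLevel ht).1, hst⟩, child false, child true⟩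

end Graft

section Conditions

variable {ι : Type*} {D D' D'' : Set ι} {f f' f'' r : ι → Set (List Bool)} {F : Finset ι}
  {n : ℕ} {σ τ : ι → List Bool} {α : ι}

theorem CSLe.refl (D : Set ι) (f : ι → Set (List Bool)) : CSLe D f D f :=
  ⟨subset_rfl, fun _ _ => subset_rfl⟩

theorem CSLe.trans (h₁ : CSLe D'' f'' D' f') (h₂ : CSLe D' f' D f) : CSLe D'' f'' D f :=
  ⟨h₂.1.trans h₁.1, fun α hα => (h₁.2 α (h₂.1 hα)).trans (h₂.2 α hα)⟩

theorem CSLeFN.refl (D : Set ι) (f : ι → Set (List Bool)) (F : Finset ι) (n : ℕ) :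
    CSLeFN D f D f F n :=
  ⟨CSLe.refl D f, fun _ _ => ⟨subset_rfl, rfl⟩⟩

theorem CSLeFN.trans (h₁ : CSLeFN D'' f'' D' f' F n) (h₂ : CSLeFN D' f' D f F n) :
    CSLeFN D'' f'' D f F n :=
  ⟨h₁.1.trans h₂.1, fun α hα =>
    ⟨(h₁.2 α hα).1.trans (h₂.2 α hα).1, (h₁.2 α hα).2.trans (h₂.2 α hα).2⟩⟩

theorem Suitable.of_leFN (hle : CSLeFN D' f' D f F n) (hσ : Suitable f F n σ) :
    Suitable f' F n σ := by
  intro α hα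
  rw [(hle.2 α hα).2]
  exact hσ α hα

theorem Suitable.mem (hσ : Suitable f F n σ) (hα : α ∈ F) : σ α ∈ f α := by
  obtain ⟨s, hs, i, hσα⟩ := hσ α hα
  exact hσα ▸ (isSplitNode_of_mem_splLevel hs).append_mem i

theorem finite_setOf_suitable (f : ι → Set (List Bool)) (F : Finset ι) (n : ℕ) :
    {σ | Suitable f F n σ ∧ ∀ α ∉ F, σ α = []}.Finite := by
  have hsucc : ∀ a : F, {u | ∃ s ∈ splLevel (f a) n, ∃ i : Bool, u = s ++ [i]}.Finite :=
    fun a => ((splLevel_finite n).image2 (fun s i => s ++ [i]) Set.finite_univ).subset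
      (by rintro u ⟨s, hs, i, rfl⟩; exact ⟨s, hs, i, trivial, rfl⟩)
  refine Set.Finite.of_finite_image (f := fun σ (a : F) => σ a) ((Set.Finite.pi hsucc).subset ?_)
    fun σ hσ τ hτ hστ => funext fun α => ?_
  · rintro _ ⟨σ, hσ, rfl⟩ a -
    exact hσ.1 a a.2
  · by_cases hα : α ∈ F
    · exact congrFun hστ ⟨α, hα⟩
    · rw [hσ.2 α hα, hτ.2 α hα]

variable [DecidableEq ι]

theorem restrictVal_of_mem (hα : α ∈ F) :
    restrictVal f F σ α = treeRestrict (f α) (σ α) :=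
  if_pos hα

theorem restrictVal_of_notMem (hα : α ∉ F) : restrictVal f F σ α = f α :=
  if_neg hα

theorem restrictVal_subset : restrictVal f F σ α ⊆ f α := by
  by_cases hα : α ∈ F
  · exact restrictVal_of_mem hα ▸ treeRestrict_subset
  · exact (restrictVal_of_notMem hα).subset

theorem restrictVal_congr (h : ∀ α ∈ F, σ α = τ α) : restrictVal f F σ = restrictVal f F τ := by
  funext α
  by_cases hα : α ∈ F
  · rw [restrictVal_of_mem hα, restrictVal_of_mem hα, h α hα]
  · rw [restrictVal_of_notMem hα, restrictVal_of_notMem hα]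

theorem restrictVal_le (D : Set ι) : CSLe D (restrictVal f F σ) D f :=
  ⟨subset_rfl, fun _ _ => restrictVal_subset⟩

theorem CSLe.restrict (h : CSLe D' f' D f) :
    CSLe D' (restrictVal f' F σ) D (restrictVal f F σ) := by
  refine ⟨h.1, fun α hα => ?_⟩
  by_cases hαF : α ∈ F
  · rw [restrictVal_of_mem hαF, restrictVal_of_mem hαF]
    exact treeRestrict_mono (h.2 α hα)
  · rw [restrictVal_of_notMem hαF, restrictVal_of_notMem hαF]
    exact h.2 α hα

theorem IsCSCond.restrict (hc : IsCSCond D f) (hσ : Suitable f F n σ) :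
    IsCSCond D (restrictVal f F σ) := by
  refine ⟨hc.1, fun α hα => ?_⟩
  by_cases hαF : α ∈ F
  · rw [restrictVal_of_mem hαF]
    exact (hc.2 α hα).restrict (hσ.mem hαF)
  · rw [restrictVal_of_notMem hαF]
    exact hc.2 α hα

def graftVal (F : Finset ι) (σ : ι → List Bool) (f r : ι → Set (List Bool)) :
    ι → Set (List Bool) :=
  fun α => if α ∈ F then graft (r α) (f α) (σ α) else r α

theorem graftVal_of_mem (hα : α ∈ F) : graftVal F σ f r α = graft (r α) (f α) (σ α) :=
  if_pos hα

theorem graftVal_of_notMem (hα : α ∉ F) : graftVal F σ f r α = r α :=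
  if_neg hα

theorem CSLe.subset_treeRestrict (hrσ : CSLe D' r D (restrictVal f F σ)) (hF : ↑F ⊆ D)
    (hα : α ∈ F) : r α ⊆ treeRestrict (f α) (σ α) :=
  restrictVal_of_mem hα ▸ hrσ.2 α (hF hα)

theorem IsCSCond.graftVal (hc : IsCSCond D f) (hF : ↑F ⊆ D) (hr : IsCSCond D' r)
    (hrσ : CSLe D' r D (restrictVal f F σ)) : IsCSCond D' (graftVal F σ f r) := by
  refine ⟨hr.1, fun α hα => ?_⟩
  by_cases hαF : α ∈ F
  · rw [graftVal_of_mem hαF]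
    exact (hc.2 α (hF hαF)).graft (hr.2 α hα) (hrσ.subset_treeRestrict hF hαF)
  · rw [graftVal_of_notMem hαF]
    exact hr.2 α hα

theorem graftVal_leFN (hc : IsCSCond D f) (hF : ↑F ⊆ D) (hσ : Suitable f F n σ)
    (hr : IsCSCond D' r) (hrσ : CSLe D' r D (restrictVal f F σ)) :
    CSLeFN D' (graftVal F σ f r) D f F n := by
  have hsub : ∀ α ∈ D, graftVal F σ f r α ⊆ f α := fun α hα => by
    by_cases hαF : α ∈ F
    · rw [graftVal_of_mem hαF]
      exact graft_subset ((hrσ.subset_treeRestrict hF hαF).trans treeRestrict_subset)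
    · rw [graftVal_of_notMem hαF]
      exact (hrσ.2 α hα).trans restrictVal_subset
  refine ⟨⟨hrσ.1, hsub⟩, fun α hαF => ⟨hsub α (hF hαF), ?_⟩⟩
  obtain ⟨s, hs, i, hσα⟩ := hσ α hαF
  have hrα := hrσ.subset_treeRestrict hF hαF
  rw [graftVal_of_mem hαF, hσα] at *
  exact splLevel_graft (hc.2 α (hF hαF)) (hr.2 α (hrσ.1 (hF hαF))) hs i hrα

theorem restrictVal_graftVal (hF : ↑F ⊆ D) (hr : IsCSCond D' r)
    (hrσ : CSLe D' r D (restrictVal f F σ)) : restrictVal (graftVal F σ f r) F σ = r := by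
  funext α
  by_cases hαF : α ∈ F
  · rw [restrictVal_of_mem hαF, graftVal_of_mem hαF]
    exact treeRestrict_graft (hr.2 α (hrσ.1 (hF hαF))) (hrσ.subset_treeRestrict hF hαF)
  · rw [restrictVal_of_notMem hαF, graftVal_of_notMem hαF]

end Conditions

def IsOpenDenseBelow {ι : Type*} (𝒟 : Set (Set ι × (ι → Set (List Bool)))) (D : Set ι)
    (f : ι → Set (List Bool)) : Prop :=
  (∀ (D' : Set ι) (f' : ι → Set (List Bool)), IsCSCond D' f' → CSLe D' f' D f →
    ∃ (D'' : Set ι) (f'' : ι → Set (List Bool)),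
      (D'', f'') ∈ 𝒟 ∧ IsCSCond D'' f'' ∧ CSLe D'' f'' D' f') ∧
  (∀ (D' : Set ι) (f' : ι → Set (List Bool)), (D', f') ∈ 𝒟 →
    ∀ (D'' : Set ι) (f'' : ι → Set (List Bool)), IsCSCond D'' f'' →
      CSLe D'' f'' D' f' → CSLe D'' f'' D f → (D'', f'') ∈ 𝒟)

theorem exists_leFN_forall_restrictVal_mem {ι : Type*} [DecidableEq ι] {D : Set ι}
    {f : ι → Set (List Bool)} {F : Finset ι} {n : ℕ} {𝒟 : Set (Set ι × (ι → Set (List Bool)))}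
    (h𝒟 : IsOpenDenseBelow 𝒟 D f) (hc : IsCSCond D f) (hF : ↑F ⊆ D)
    (S : Finset (ι → List Bool)) (hS : ∀ σ ∈ S, Suitable f F n σ) :
    ∃ (D' : Set ι) (f' : ι → Set (List Bool)), IsCSCond D' f' ∧ CSLeFN D' f' D f F n ∧
      ∀ σ ∈ S, (D', restrictVal f' F σ) ∈ 𝒟 := by
  classical
  induction S using Finset.induction_on with
  | empty => exact ⟨D, f, hc, CSLeFN.refl D f F n, by simp⟩
  | insert σ S _ ih =>
    obtain ⟨Dq, g, hq, hqp, hq𝒟⟩ := ih fun τ hτ => hS τ (Finset.mem_insert_of_mem hτ)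
    have hσ : Suitable g F n σ := (hS σ (Finset.mem_insert_self σ S)).of_leFN hqp
    have hFq : ↑F ⊆ Dq := hF.trans hqp.1.1
    obtain ⟨Dr, r, hr𝒟, hr, hrσ⟩ :=
      h𝒟.1 Dq (restrictVal g F σ) (hq.restrict hσ) ((restrictVal_le Dq).trans hqp.1)
    have hq'q := graftVal_leFN hq hFq hσ hr hrσ
    have hq' := hq.graftVal hFq hr hrσ
    refine ⟨Dr, graftVal F σ g r, hq', hq'q.trans hqp, fun τ hτ => ?_⟩
    rcases Finset.mem_insert.1 hτ with rfl | hτ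
    · rwa [restrictVal_graftVal hFq hr hrσ]
    · exact h𝒟.2 _ _ (hq𝒟 τ hτ) _ _
        (hq'.restrict ((hS τ (Finset.mem_insert_of_mem hτ)).of_leFN (hq'q.trans hqp)))
        hq'q.1.restrict ((restrictVal_le Dr).trans (hq'q.trans hqp).1)

/-- Let `p = (D, f)` be a condition of `S^λ`, `F ⊆ D` finite, `n < ω`, and let `𝒟` be a
set of conditions which is open dense below `p`. Then there is `q ≤_{F,n} p` such that
`q↾σ ∈ 𝒟` for every `σ` suitable for `p`, `F` and `n`. -/
theorem extend_into_dense_open {ι : Type*} [DecidableEq ι]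
    (D : Set ι) (f : ι → Set (List Bool)) (F : Finset ι) (n : ℕ)
    (𝒟 : Set (Set ι × (ι → Set (List Bool))))
    (hc : IsCSCond D f) (hF : ↑F ⊆ D)
    (hdense : ∀ (D' : Set ι) (f' : ι → Set (List Bool)), IsCSCond D' f' → CSLe D' f' D f →
        ∃ (D'' : Set ι) (f'' : ι → Set (List Bool)),
          (D'', f'') ∈ 𝒟 ∧ IsCSCond D'' f'' ∧ CSLe D'' f'' D' f')
    (hopen : ∀ (D' : Set ι) (f' : ι → Set (List Bool)), (D', f') ∈ 𝒟 →
        ∀ (D'' : Set ι) (f'' : ι → Set (List Bool)), IsCSCond D'' f'' →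
          CSLe D'' f'' D' f' → CSLe D'' f'' D f → (D'', f'') ∈ 𝒟) :
    ∃ (D' : Set ι) (f' : ι → Set (List Bool)), IsCSCond D' f' ∧ CSLeFN D' f' D f F n ∧
      ∀ σ, Suitable f F n σ → (D', restrictVal f' F σ) ∈ 𝒟 := by
  have hfin := finite_setOf_suitable f F n
  obtain ⟨D', f', hc', hle, hmem⟩ := exists_leFN_forall_restrictVal_mem ⟨hdense, hopen⟩ hc hF
    hfin.toFinset fun σ hσ => (hfin.mem_toFinset.1 hσ).1
  refine ⟨D', f', hc', hle, fun σ hσ => ?_⟩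
  have hσ₀ : F.piecewise σ (fun _ => []) ∈ hfin.toFinset := by
    refine hfin.mem_toFinset.2 ⟨fun α hα => ?_, fun α hα => F.piecewise_eq_of_notMem _ _ hα⟩
    rw [F.piecewise_eq_of_mem _ _ hα]
    exact hσ α hα
  rw [restrictVal_congr fun α hα => (F.piecewise_eq_of_mem σ (fun _ => []) hα).symm]
  exact hmem _ hσ₀
end

section
/- Let p, q, r ⊆ 2^{<ω} be perfect trees with r ⊆ p, and let π̂ : [p] → [q] be the induced homeomorphism. Then the set s := {u ∈ 2^{<ω} : ∃x ∈ [r], u ⊆ π̂(x)} is a perfect tree with s ⊆ q, and π̂[[r]] = [s]. -/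
/-- The set `spl(T)` of splitting nodes of `T`. -/
def splSet (T : Set (List Bool)) : Set (List Bool) := {s | IsSplitNode T s}

/-- `π` is the induced bijection of the perfect trees `p` and `q`: a bijection from
`spl(p)` onto `spl(q)` with `π(stem(p)) = stem(q)` and
`π(sucspl_p(s⌢i)) = sucspl_q(π(s)⌢i)` for all `s ∈ spl(p)` and `i ∈ 2`. -/
def InducedBij (p q : Set (List Bool)) (π : List Bool → List Bool) : Prop :=
  Set.BijOn π (splSet p) (splSet q) ∧
  (∀ t, IsMinSplit p [] t → IsMinSplit q [] (π t)) ∧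
  (∀ s ∈ splSet p, ∀ i : Bool, ∀ t, IsMinSplit p (s ++ [i]) t →
      IsMinSplit q (π s ++ [i]) (π t))

/-- The initial segment `x↾n` of `x ∈ 2^ω`, as a finite binary sequence. -/
def initSeg (x : ℕ → Bool) (n : ℕ) : List Bool := List.ofFn (fun i : Fin n => x i)

/-- The set of branches `[T] = {x ∈ 2^ω : ∀ n, x↾n ∈ T}` of a tree `T`. -/
def branches (T : Set (List Bool)) : Set (ℕ → Bool) := {x | ∀ n, initSeg x n ∈ T}

/-- `s ⊆ x`: the finite sequence `s` is an initial segment of the branch `x`. -/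
def PrefixOfBranch (s : List Bool) (x : ℕ → Bool) : Prop := initSeg x s.length = s

/-- `g` is the map `[p] → [q]` induced by `π : spl(p) → spl(q)`, i.e.
`g(x) = ⋃ {π(s) : s ∈ spl(p), s ⊆ x}`; equivalently, for every `x ∈ [p]` and every
splitting node `s ⊆ x` of `p` we have `π(s) ⊆ g(x)`. -/
def InducedMap (p q : Set (List Bool)) (π : List Bool → List Bool)
    (g : (ℕ → Bool) → (ℕ → Bool)) : Prop :=
  ∀ x ∈ branches p, ∀ s ∈ splSet p, PrefixOfBranch s x → PrefixOfBranch (π s) (g x)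

/-!
Along a branch `x` of `p`, the splitting nodes `x↾a ⊊ x↾b` of `p` satisfy `π(x↾a)⌢x(a) ⊆ π(x↾b)`:
the minimal splitting node above `x↾(a+1)` is sent to an extension of `π(x↾a)⌢x(a)`. So the
images `π(x↾k)` form a strictly increasing chain of initial segments of `π̂(x)`, and every
initial segment of `π̂(x)` is determined by a finite initial segment of `x`. Thus `π̂` is
continuous on `[p]` and maps it into `[q]`, and `π̂[[r]]` is compact, hence closed, hence the set
of branches of the tree `s` of its initial segments. Applied to a branch of `r` through `t⌢i`,
the same chain shows that `π(t)` splits in `s` whenever `t` splits in `r`, so `s` is perfect.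
-/

open Filter Set

lemma initSeg_length (x : ℕ → Bool) (n : ℕ) : (initSeg x n).length = n := by
  simp [initSeg]

lemma initSeg_take (x : ℕ → Bool) {m n : ℕ} (h : m ≤ n) :
    (initSeg x n).take m = initSeg x m := by
  apply List.ext_getElem
  · simp [initSeg_length, h]
  · intro i _ _
    simp [initSeg]

lemma initSeg_prefix_initSeg (x : ℕ → Bool) {m n : ℕ} (h : m ≤ n) :
    initSeg x m <+: initSeg x n := by
  rw [← initSeg_take x h]
  exact List.take_prefix _ _

lemma initSeg_succ (x : ℕ → Bool) (n : ℕ) : initSeg x (n + 1) = initSeg x n ++ [x n] := by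
  rw [initSeg, List.ofFn_succ']
  simp [initSeg, Fin.castSucc]

lemma initSeg_eq_initSeg_iff {x y : ℕ → Bool} {n : ℕ} :
    initSeg x n = initSeg y n ↔ ∀ i < n, x i = y i := by
  simp [initSeg, List.ofFn_inj, funext_iff, Fin.forall_iff]

lemma isClopen_initSeg_preimage (A : Set (List Bool)) (n : ℕ) :
    IsClopen ((initSeg · n) ⁻¹' A) :=
  (isClopen_discrete (List.ofFn ⁻¹' A : Set (Fin n → Bool))).preimage
    (continuous_pi fun i => continuous_apply (i : ℕ))

lemma prefixOfBranch_initSeg (x : ℕ → Bool) (n : ℕ) : PrefixOfBranch (initSeg x n) x := by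
  rw [PrefixOfBranch, initSeg_length]

lemma prefixOfBranch_getD (t : List Bool) (d : Bool) : PrefixOfBranch t (fun i => t.getD i d) := by
  apply List.ext_getElem
  · simp [initSeg_length]
  · intro i _ _
    simp [initSeg]

lemma PrefixOfBranch.initSeg_eq_take {s : List Bool} {x : ℕ → Bool} (h : PrefixOfBranch s x)
    {n : ℕ} (hn : n ≤ s.length) : initSeg x n = s.take n := by
  rw [← initSeg_take x hn, h]

lemma PrefixOfBranch.of_prefix {u v : List Bool} {x : ℕ → Bool} (hv : PrefixOfBranch v x)
    (huv : u <+: v) : PrefixOfBranch u x := by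
  rw [PrefixOfBranch, hv.initSeg_eq_take huv.length_le, ← List.prefix_iff_eq_take.mp huv]

lemma PrefixOfBranch.prefix {u v : List Bool} {x : ℕ → Bool} (hu : PrefixOfBranch u x)
    (hv : PrefixOfBranch v x) (h : u.length ≤ v.length) : u <+: v := by
  rw [← hu, hv.initSeg_eq_take h]
  exact List.take_prefix _ _

lemma branches_mono {T T' : Set (List Bool)} (h : T ⊆ T') : branches T ⊆ branches T' :=
  fun _ hx n => h (hx n)

lemma isClosed_branches (T : Set (List Bool)) : IsClosed (branches T) := by
  have : branches T = ⋂ n, (initSeg · n) ⁻¹' T := by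
    ext x
    simp [branches]
  rw [this]
  exact isClosed_iInter fun n => (isClopen_initSeg_preimage T n).isClosed

lemma IsSplitNode.append_mem_s6 {T : Set (List Bool)} {s : List Bool} (h : IsSplitNode T s) :
    ∀ i, s ++ [i] ∈ T
  | false => h.2.1
  | true => h.2.2

lemma IsSplitNode.mono {T T' : Set (List Bool)} {s : List Bool} (h : IsSplitNode T s)
    (hT : T ⊆ T') : IsSplitNode T' s :=
  ⟨hT h.1, hT h.2.1, hT h.2.2⟩

section Branch

variable {T : Set (List Bool)} {x : ℕ → Bool}

lemma IsBinTree.prefixOfBranch_or_exists_isSplitNode (hT : IsBinTree T) (hx : x ∈ branches T)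
    {t : List Bool} (ht : t ∈ T) {n : ℕ} (hpre : initSeg x n <+: t) :
    PrefixOfBranch t x ∨ ∃ j, n ≤ j ∧ initSeg x j <+: t ∧ IsSplitNode T (initSeg x j) := by
  induction t using List.reverseRecOn with
  | nil => exact Or.inl (by simp [PrefixOfBranch, initSeg])
  | append_singleton l b ih =>
    rcases List.prefix_concat_iff.mp hpre with h | h
    · exact Or.inl (h ▸ prefixOfBranch_initSeg x n)
    have hl : l ∈ T := hT _ ht l (List.prefix_append _ _)
    rcases ih hl h with hlx | ⟨j, hnj, hjl, hsplit⟩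
    · by_cases hb : b = x l.length
      · left
        rw [PrefixOfBranch, List.length_append, List.length_singleton, initSeg_succ, hlx, hb]
      · right
        refine ⟨l.length, by simpa [initSeg_length] using h.length_le, by rw [hlx]; simp, ?_⟩
        have hxl := hx (l.length + 1)
        rw [initSeg_succ, hlx] at hxl
        rw [hlx]
        refine ⟨hl, ?_, ?_⟩ <;> cases b <;> cases hxb : x l.length <;> simp_all
    · exact Or.inr ⟨j, hnj, hjl.trans (List.prefix_append _ _), hsplit⟩

lemma IsBinTree.exists_isSplitNode_initSeg_prefix (hT : IsBinTree T) (hx : x ∈ branches T)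
    {t : List Bool} (ht : IsSplitNode T t) {n : ℕ} (hpre : initSeg x n <+: t) :
    ∃ j, n ≤ j ∧ initSeg x j <+: t ∧ IsSplitNode T (initSeg x j) := by
  rcases hT.prefixOfBranch_or_exists_isSplitNode hx ht.1 hpre with htx | h
  · refine ⟨t.length, by simpa [initSeg_length] using hpre.length_le, ?_⟩
    rw [htx]
    exact ⟨List.prefix_refl t, ht⟩
  · exact h

lemma IsPerfectTree.exists_isSplitNode_initSeg (hT : IsPerfectTree T) (hx : x ∈ branches T)
    (n : ℕ) : ∃ k, n ≤ k ∧ IsSplitNode T (initSeg x k) := by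
  obtain ⟨t, hpre, ht⟩ := hT.2.2 _ (hx n)
  obtain ⟨k, hk, -, hsplit⟩ := hT.1.exists_isSplitNode_initSeg_prefix hx ht hpre
  exact ⟨k, hk, hsplit⟩

lemma IsPerfectTree.exists_isMinSplit_initSeg (hT : IsPerfectTree T) (hx : x ∈ branches T)
    (n : ℕ) : ∃ k, n ≤ k ∧ IsMinSplit T (initSeg x n) (initSeg x k) := by
  classical
  have hex := hT.exists_isSplitNode_initSeg hx n
  obtain ⟨hnk, hsplit⟩ := Nat.find_spec hex
  refine ⟨Nat.find hex, hnk, hsplit, initSeg_prefix_initSeg x hnk, fun t ht hpre => ?_⟩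
  obtain ⟨j, hnj, hjt, hj⟩ := hT.1.exists_isSplitNode_initSeg_prefix hx ht hpre
  exact (initSeg_prefix_initSeg x (Nat.find_min' hex ⟨hnj, hj⟩)).trans hjt

lemma IsPerfectTree.exists_append_singleton_mem (hT : IsPerfectTree T) {s : List Bool}
    (hs : s ∈ T) : ∃ b, s ++ [b] ∈ T := by
  obtain ⟨t, ⟨d, rfl⟩, ht⟩ := hT.2.2 s hs
  cases d with
  | nil => exact ⟨false, by simpa using ht.2.1⟩
  | cons b d => exact ⟨b, hT.1 _ ht.1 _ (by simp)⟩

lemma IsPerfectTree.exists_branch (hT : IsPerfectTree T) {s : List Bool} (hs : s ∈ T) :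
    ∃ x ∈ branches T, PrefixOfBranch s x := by
  have hlong : ∀ n, ∃ t ∈ T, s <+: t ∧ n ≤ t.length := by
    intro n
    induction n with
    | zero => exact ⟨s, hs, List.prefix_refl s, Nat.zero_le _⟩
    | succ n ih =>
      obtain ⟨t, ht, hst, hn⟩ := ih
      obtain ⟨b, hb⟩ := hT.exists_append_singleton_mem ht
      exact ⟨t ++ [b], hb, hst.trans (List.prefix_append _ _), by simp; omega⟩
  let K : ℕ → Set (ℕ → Bool) := fun n => {x | PrefixOfBranch s x} ∩ (initSeg · n) ⁻¹' T
  have hKclosed : ∀ n, IsClosed (K n) := fun n =>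
    (isClopen_initSeg_preimage {s} _).isClosed.inter (isClopen_initSeg_preimage T n).isClosed
  have hKanti : ∀ n, K (n + 1) ⊆ K n := fun n x hx =>
    ⟨hx.1, hT.1 _ hx.2 _ (initSeg_prefix_initSeg x n.le_succ)⟩
  have hKne : ∀ n, (K n).Nonempty := by
    intro n
    obtain ⟨t, ht, hst, hn⟩ := hlong n
    have htx := prefixOfBranch_getD t false
    exact ⟨_, htx.of_prefix hst, hT.1 _ (by rwa [htx]) _ (initSeg_prefix_initSeg _ hn)⟩
  obtain ⟨x, hx⟩ := IsCompact.nonempty_iInter_of_sequence_nonempty_isCompact_isClosed K hKanti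
    hKne (hKclosed 0).isCompact hKclosed
  rw [mem_iInter] at hx
  exact ⟨x, fun n => (hx n).2, (hx 0).1⟩

end Branch

def prefixTree (A : Set (ℕ → Bool)) : Set (List Bool) := {u | ∃ y ∈ A, PrefixOfBranch u y}

section PrefixTree

variable {A : Set (ℕ → Bool)}

lemma isBinTree_prefixTree (A : Set (ℕ → Bool)) : IsBinTree (prefixTree A) :=
  fun _ ⟨y, hy, hu⟩ _ ht => ⟨y, hy, hu.of_prefix ht⟩

lemma prefixTree_subset {T : Set (List Bool)} (h : A ⊆ branches T) : prefixTree A ⊆ T := by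
  rintro u ⟨y, hy, hu⟩
  rw [← hu]
  exact h hy _

lemma subset_branches_prefixTree : A ⊆ branches (prefixTree A) :=
  fun y hy n => ⟨y, hy, prefixOfBranch_initSeg y n⟩

lemma branches_prefixTree_subset_closure : branches (prefixTree A) ⊆ closure A := by
  intro y hy
  choose a ha hay using hy
  refine mem_closure_of_tendsto (b := atTop) (tendsto_pi_nhds.mpr fun j => ?_)
    (Eventually.of_forall ha)
  rw [nhds_discrete, tendsto_pure]
  filter_upwards [eventually_gt_atTop j] with n hn
  have hagree := hay n
  rw [PrefixOfBranch, initSeg_length, initSeg_eq_initSeg_iff] at hagree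
  exact hagree j hn

lemma IsClosed.branches_prefixTree (hA : IsClosed A) : branches (prefixTree A) = A :=
  (branches_prefixTree_subset_closure.trans hA.closure_subset).antisymm subset_branches_prefixTree

end PrefixTree

section Induced

variable {p q : Set (List Bool)} {π : List Bool → List Bool} {x : ℕ → Bool}

lemma InducedBij.append_prefix (hπ : InducedBij p q π) (hp : IsPerfectTree p)
    (hx : x ∈ branches p) {a b : ℕ} (hab : a < b) (ha : IsSplitNode p (initSeg x a))
    (hb : IsSplitNode p (initSeg x b)) : π (initSeg x a) ++ [x a] <+: π (initSeg x b) := by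
  induction hd : b - a using Nat.strong_induction_on generalizing a with
  | _ d ih =>
  obtain ⟨c, hac', hc⟩ := hp.exists_isMinSplit_initSeg hx (a + 1)
  have hcb : c ≤ b := by
    simpa [initSeg_length] using (hc.2.2 _ hb (initSeg_prefix_initSeg x hab)).length_le
  have hac : π (initSeg x a) ++ [x a] <+: π (initSeg x c) :=
    (hπ.2.2 _ ha (x a) _ (initSeg_succ x a ▸ hc)).2.1
  rcases hcb.lt_or_eq with hcb | rfl
  · exact hac.trans ((List.prefix_append _ _).trans (ih (b - c) (by omega) hcb hc.1 rfl))
  · exact hac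

lemma InducedBij.exists_isSplitNode_le_length (hπ : InducedBij p q π) (hp : IsPerfectTree p)
    {T : Set (List Bool)} (hT : IsPerfectTree T) (hTp : T ⊆ p) (hx : x ∈ branches T) (N : ℕ) :
    ∃ k, IsSplitNode T (initSeg x k) ∧ N ≤ (π (initSeg x k)).length := by
  induction N with
  | zero =>
    obtain ⟨k, -, hk⟩ := hT.exists_isSplitNode_initSeg hx 0
    exact ⟨k, hk, Nat.zero_le _⟩
  | succ N ih =>
    obtain ⟨k, hk, hN⟩ := ih
    obtain ⟨k', hkk', hk'⟩ := hT.exists_isSplitNode_initSeg hx (k + 1)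
    have := (hπ.append_prefix hp (branches_mono hTp hx) hkk' (hk.mono hTp) (hk'.mono hTp)).length_le
    exact ⟨k', hk', by simp at this; omega⟩

variable {g : (ℕ → Bool) → (ℕ → Bool)}

lemma InducedMap.mem_branches (hg : InducedMap p q π g) (hp : IsPerfectTree p) (hq : IsBinTree q)
    (hπ : InducedBij p q π) (hx : x ∈ branches p) : g x ∈ branches q := by
  intro n
  obtain ⟨k, hk, hn⟩ := hπ.exists_isSplitNode_le_length hp hp subset_rfl hx n
  rw [(hg x hx _ hk (prefixOfBranch_initSeg x k)).initSeg_eq_take hn]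
  exact hq _ (hπ.1.mapsTo hk).1 _ (List.take_prefix _ _)

lemma InducedMap.exists_initSeg_eq (hg : InducedMap p q π g) (hp : IsPerfectTree p)
    (hπ : InducedBij p q π) {z : ℕ → Bool} (hz : z ∈ branches p) (n : ℕ) :
    ∃ k, ∀ w ∈ branches p, initSeg w k = initSeg z k → initSeg (g w) n = initSeg (g z) n := by
  obtain ⟨k, hk, hn⟩ := hπ.exists_isSplitNode_le_length hp hp subset_rfl hz n
  refine ⟨k, fun w hw hwz => ?_⟩
  have hzw : PrefixOfBranch (initSeg z k) w := by rw [PrefixOfBranch, initSeg_length, hwz]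
  rw [(hg w hw _ hk hzw).initSeg_eq_take hn,
    (hg z hz _ hk (prefixOfBranch_initSeg z k)).initSeg_eq_take hn]

lemma InducedMap.continuousOn (hg : InducedMap p q π g) (hp : IsPerfectTree p)
    (hπ : InducedBij p q π) : ContinuousOn g (branches p) := by
  refine continuousOn_pi.mpr fun j z hz => ?_
  obtain ⟨k, hk⟩ := hg.exists_initSeg_eq hp hπ hz (j + 1)
  rw [ContinuousWithinAt, nhds_discrete, tendsto_pure]
  have hcyl := (isClopen_initSeg_preimage {initSeg z k} k).isOpen.mem_nhds (mem_singleton _)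
  filter_upwards [mem_nhdsWithin_of_mem_nhds hcyl, self_mem_nhdsWithin] with w hwz hw
  exact initSeg_eq_initSeg_iff.mp (hk w hw hwz) j j.lt_succ_self

lemma InducedMap.isSplitNode_prefixTree_image (hg : InducedMap p q π g) (hp : IsPerfectTree p)
    (hπ : InducedBij p q π) {r : Set (List Bool)} (hr : IsPerfectTree r) (hrp : r ⊆ p)
    (hx : x ∈ branches r) {k : ℕ} (hk : IsSplitNode r (initSeg x k)) :
    IsSplitNode (prefixTree (g '' branches r)) (π (initSeg x k)) := by
  have hrb := branches_mono hrp
  have hchild : ∀ i, π (initSeg x k) ++ [i] ∈ prefixTree (g '' branches r) := by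
    intro i
    obtain ⟨y, hy, hxy⟩ := hr.exists_branch (hk.append_mem_s6 i)
    rw [PrefixOfBranch, List.length_append, initSeg_length, List.length_singleton,
      initSeg_succ] at hxy
    obtain ⟨hyx, hyi⟩ := List.append_inj' hxy rfl
    obtain ⟨b, hkb, hb⟩ := hp.exists_isSplitNode_initSeg (hrb hy) (k + 1)
    have hpre := hπ.append_prefix hp (hrb hy) hkb (hyx ▸ hk.mono hrp) hb
    rw [hyx, List.singleton_inj.mp hyi] at hpre
    exact ⟨g y, mem_image_of_mem g hy,
      (hg y (hrb hy) _ hb (prefixOfBranch_initSeg y b)).of_prefix hpre⟩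
  exact ⟨⟨g x, mem_image_of_mem g hx, hg x (hrb hx) _ (hk.mono hrp) (prefixOfBranch_initSeg x k)⟩,
    hchild false, hchild true⟩

lemma InducedMap.isPerfectTree_prefixTree_image (hg : InducedMap p q π g) (hp : IsPerfectTree p)
    (hπ : InducedBij p q π) {r : Set (List Bool)} (hr : IsPerfectTree r) (hrp : r ⊆ p) :
    IsPerfectTree (prefixTree (g '' branches r)) := by
  obtain ⟨s, hs⟩ := hr.2.1
  obtain ⟨x, hx, -⟩ := hr.exists_branch hs
  refine ⟨isBinTree_prefixTree _, ⟨[], g x, mem_image_of_mem g hx, rfl⟩, ?_⟩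
  rintro u ⟨_, ⟨x, hx, rfl⟩, hu⟩
  obtain ⟨k, hk, hlen⟩ := hπ.exists_isSplitNode_le_length hp hr hrp hx u.length
  have hπx := hg x (branches_mono hrp hx) _ (hk.mono hrp) (prefixOfBranch_initSeg x k)
  exact ⟨_, hu.prefix hπx hlen, hg.isSplitNode_prefixTree_image hp hπ hr hrp hx hk⟩

end Induced

/-- Let `p, q, r` be perfect trees with `r ⊆ p` and let `π̂ = g` be the homeomorphism
`[p] → [q]` induced by the induced bijection `π : spl(p) → spl(q)`. Then
`s := {u : ∃ x ∈ [r], u ⊆ π̂(x)}` is a perfect tree, `s ⊆ q`, and `π̂[[r]] = [s]`. -/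
theorem image_of_subtree (p q r : Set (List Bool))
    (hp : IsPerfectTree p) (hq : IsPerfectTree q) (hr : IsPerfectTree r)
    (hrp : r ⊆ p)
    (π : List Bool → List Bool) (hπ : InducedBij p q π)
    (g : (ℕ → Bool) → (ℕ → Bool)) (hg : InducedMap p q π g) :
    IsPerfectTree {u : List Bool | ∃ x ∈ branches r, PrefixOfBranch u (g x)} ∧
    {u : List Bool | ∃ x ∈ branches r, PrefixOfBranch u (g x)} ⊆ q ∧
    g '' branches r = branches {u : List Bool | ∃ x ∈ branches r, PrefixOfBranch u (g x)} := by
  have hS : {u : List Bool | ∃ x ∈ branches r, PrefixOfBranch u (g x)} =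
      prefixTree (g '' branches r) := by
    ext u
    simp [prefixTree]
  have hrb : branches r ⊆ branches p := branches_mono hrp
  have hclosed : IsClosed (g '' branches r) :=
    ((isClosed_branches r).isCompact.image_of_continuousOn
      ((hg.continuousOn hp hπ).mono hrb)).isClosed
  rw [hS]
  refine ⟨hg.isPerfectTree_prefixTree_image hp hπ hr hrp, prefixTree_subset ?_,
    hclosed.branches_prefixTree.symm⟩
  rintro _ ⟨x, hx, rfl⟩
  exact hg.mem_branches hp hq.1 hπ (hrb hx)
end

section
/- Let A be a set, x ∉ A, let ρ : A → Sym(ℕ) induce a cofinitary representation, and let f ∈ Sym(ℕ). If for every nice word w ∈ F_{A∪{x}} with respect to ρ the set fix(ρ[f]̂(w)) is finite, then ρ[f] := ρ ∪ {(x, f)} induces a cofinitary representation, i.e., every element of the range of the induced homomorphism ρ[f]̂ : F_{A∪{x}} → Sym(ℕ) is the identity or has only finitely many fixed points. -/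
/-!
Every element of `F_{A ∪ {x}}` is a product of blocks `u x^k` with `u ∈ F_A`. Being the identity
or cofinitary is invariant under conjugation, hence under cyclic rotation of the blocks. A
degenerate block (`ρ̂ u = 1`, or `k = 0`) can be rotated next to a neighbour and merged into it,
which shortens the product without leaving the conjugacy class of its image; a lone degenerate
block is a power of `x` or an element of `F_A`. If no block is degenerate, the blocks concatenate
without cancellation (each starts with a letter of `A` and ends with a letter `x^{±1}`), so the
product is a nice word.
-/

/-- The distinguished generator `x` of the free group `F_{A ∪ {x}}`, which we realize as
the free group on `A ⊕ Unit` with `x := Sum.inr ()`. -/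
def xgen (A : Type*) : FreeGroup (A ⊕ Unit) := FreeGroup.of (Sum.inr ())

/-- The embedding of `F_A` as a subgroup of `F_{A ∪ {x}}`. -/
def embA (A : Type*) : FreeGroup A →* FreeGroup (A ⊕ Unit) :=
  FreeGroup.map Sum.inl

/-- `ρ : A → Sym(ℕ)` induces a cofinitary representation: every element of the range of
the induced homomorphism `ρ̂ : F_A → Sym(ℕ)` is the identity or has finitely many fixed
points. -/
def IsCofinitaryRep {A : Type*} (ρ : A → Equiv.Perm ℕ) : Prop :=
  ∀ w : FreeGroup A,
    FreeGroup.lift ρ w = 1 ∨ (Function.fixedPoints ⇑(FreeGroup.lift ρ w)).Finite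

/-- `w ∈ F_{A ∪ {x}}` is a nice word with respect to `ρ`: either `w = x^n` or `w = x^{-n}`
for some `n > 0`, or the reduced word of `w` is, without cancellation, of the form
`u_l x^{k_l} ⋯ u_1 x^{k_1} u_0 x^{k_0}` with each `u_i ∈ W⁰_{ρ,x} = F_A \ ker ρ̂` and each
`k_i ∈ ℤ \ {0}`. -/
def NiceWord {A : Type*} [DecidableEq A] (ρ : A → Equiv.Perm ℕ)
    (w : FreeGroup (A ⊕ Unit)) : Prop :=
  (∃ n : ℤ, n ≠ 0 ∧ w = xgen A ^ n) ∨
  (∃ l : ℕ, ∃ u : Fin (l + 1) → FreeGroup A, ∃ k : Fin (l + 1) → ℤ,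
    (∀ i, FreeGroup.lift ρ (u i) ≠ 1) ∧ (∀ i, k i ≠ 0) ∧
    w.toWord = (List.ofFn fun i : Fin (l + 1) =>
      (embA A (u i)).toWord ++ (xgen A ^ k i).toWord).flatten)

/-- The extension `ρ[f] := ρ ∪ {(x, f)} : A ∪ {x} → Sym(ℕ)` of `ρ` sending `x` to `f`. -/
def extendRep {A : Type*} (ρ : A → Equiv.Perm ℕ) (f : Equiv.Perm ℕ) :
    (A ⊕ Unit) → Equiv.Perm ℕ :=
  Sum.elim ρ (fun _ => f)

namespace Equiv.Perm

variable {α : Type*}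

def IsIdOrCofinitary (σ : Perm α) : Prop :=
  σ = 1 ∨ (Function.fixedPoints σ).Finite

open scoped Pointwise in
theorem IsIdOrCofinitary.conj {τ : Perm α} (h : τ.IsIdOrCofinitary) (σ : Perm α) :
    (σ * τ * σ⁻¹).IsIdOrCofinitary := by
  refine h.imp (fun hτ => by simp [hτ]) fun hfin => ?_
  have hfix : Function.fixedPoints ⇑(σ * τ * σ⁻¹) = σ • Function.fixedPoints ⇑τ :=
    (MulAction.smul_fixedBy α τ σ).symm
  rw [hfix, ← Set.image_smul]
  exact hfin.image _

theorem isIdOrCofinitary_mul_comm {σ τ : Perm α} :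
    (σ * τ).IsIdOrCofinitary ↔ (τ * σ).IsIdOrCofinitary :=
  ⟨fun h => by simpa [mul_assoc] using h.conj τ, fun h => by simpa [mul_assoc] using h.conj σ⟩

end Equiv.Perm

open Equiv.Perm

namespace FreeGroup

variable {α β : Type*} [DecidableEq α] [DecidableEq β]

theorem toWord_map_of_injective {f : α → β} (hf : Function.Injective f) (x : FreeGroup α) :
    (map f x).toWord = x.toWord.map fun a => (f a.1, a.2) := by
  conv_lhs => rw [← mk_toWord (x := x)]
  rw [map.mk, toWord_mk]
  exact IsReduced.reduce_eq <|
    (List.isChain_map _).2 (isReduced_toWord.imp fun _ _ h hab => h (hf hab))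

theorem toWord_of_zpow (a : α) (n : ℤ) :
    (of a ^ n).toWord = List.replicate n.natAbs (a, decide (0 ≤ n)) := by
  rcases n with n | n
  · simp [toWord_of_pow]
  · simp [zpow_negSucc, toWord_inv, toWord_of_pow, invRev, List.map_replicate]

end FreeGroup

open FreeGroup (lift mk)

section Blocks

variable {A : Type*}

def block (p : FreeGroup A × ℤ) : FreeGroup (A ⊕ Unit) :=
  embA A p.1 * xgen A ^ p.2

def blockProd (ps : List (FreeGroup A × ℤ)) : FreeGroup (A ⊕ Unit) :=
  (ps.map block).prod

@[simp]
theorem blockProd_nil : blockProd ([] : List (FreeGroup A × ℤ)) = 1 := rfl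

@[simp]
theorem blockProd_cons (p : FreeGroup A × ℤ) (ps : List (FreeGroup A × ℤ)) :
    blockProd (p :: ps) = block p * blockProd ps := List.prod_cons

@[simp]
theorem blockProd_append (ps qs : List (FreeGroup A × ℤ)) :
    blockProd (ps ++ qs) = blockProd ps * blockProd qs := by
  simp [blockProd]

theorem exists_blockProd_eq (w : FreeGroup (A ⊕ Unit)) : ∃ ps, blockProd ps = w := by
  induction w using FreeGroup.induction_on with
  | C1 => exact ⟨[], rfl⟩
  | of a =>
    rcases a with a | ⟨⟩
    · exact ⟨[(.of a, 0)], by simp [block, embA]⟩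
    · exact ⟨[(1, 1)], by simp [block, xgen]⟩
  | inv_of a =>
    rcases a with a | ⟨⟩
    · exact ⟨[((.of a)⁻¹, 0)], by simp [block, embA]⟩
    · exact ⟨[(1, -1)], by simp [block, xgen]⟩
  | mul x y hx hy =>
    obtain ⟨ps, rfl⟩ := hx
    obtain ⟨qs, rfl⟩ := hy
    exact ⟨ps ++ qs, blockProd_append ps qs⟩

theorem block_mul_block_of_snd_eq_zero {p : FreeGroup A × ℤ} (hp : p.2 = 0)
    (q : FreeGroup A × ℤ) : block p * block q = block (p.1 * q.1, q.2) := by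
  simp [block, hp, mul_assoc]

section Words

variable [DecidableEq A]

def blockWord (p : FreeGroup A × ℤ) : List ((A ⊕ Unit) × Bool) :=
  (embA A p.1).toWord ++ (xgen A ^ p.2).toWord

theorem toWord_embA (u : FreeGroup A) :
    (embA A u).toWord = u.toWord.map fun a => (Sum.inl a.1, a.2) :=
  FreeGroup.toWord_map_of_injective Sum.inl_injective u

theorem toWord_xgen_zpow (k : ℤ) :
    (xgen A ^ k).toWord = List.replicate k.natAbs (Sum.inr (), decide (0 ≤ k)) :=
  FreeGroup.toWord_of_zpow _ k

theorem isLeft_of_mem_toWord_embA {u : FreeGroup A} {a : (A ⊕ Unit) × Bool}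
    (ha : a ∈ (embA A u).toWord) : a.1.isLeft := by
  rw [toWord_embA] at ha
  obtain ⟨b, -, rfl⟩ := List.mem_map.1 ha
  rfl

theorem eq_inr_of_mem_toWord_xgen_zpow {k : ℤ} {a : (A ⊕ Unit) × Bool}
    (ha : a ∈ (xgen A ^ k).toWord) : a.1 = Sum.inr () := by
  rw [toWord_xgen_zpow] at ha
  rw [(List.mem_replicate.1 ha).2]

theorem toWord_embA_ne_nil {u : FreeGroup A} (hu : u ≠ 1) : (embA A u).toWord ≠ [] := by
  simpa [toWord_embA, FreeGroup.toWord_eq_nil_iff] using hu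

theorem toWord_xgen_zpow_ne_nil {k : ℤ} (hk : k ≠ 0) : (xgen A ^ k).toWord ≠ [] := by
  simpa [toWord_xgen_zpow] using hk

theorem isReduced_blockWord (p : FreeGroup A × ℤ) : FreeGroup.IsReduced (blockWord p) := by
  refine FreeGroup.isReduced_toWord.append FreeGroup.isReduced_toWord fun a ha b hb hab => ?_
  have hl := isLeft_of_mem_toWord_embA (List.mem_of_mem_getLast? ha)
  rw [hab, eq_inr_of_mem_toWord_xgen_zpow (List.mem_of_mem_head? hb)] at hl
  cases hl

theorem blockWord_ne_nil {p : FreeGroup A × ℤ} (hp : p.1 ≠ 1) : blockWord p ≠ [] :=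
  List.append_ne_nil_of_left_ne_nil (toWord_embA_ne_nil hp) _

theorem isLeft_of_mem_head?_blockWord {p : FreeGroup A × ℤ} (hp : p.1 ≠ 1)
    {a : (A ⊕ Unit) × Bool} (ha : a ∈ (blockWord p).head?) : a.1.isLeft := by
  rw [blockWord, List.head?_append_of_ne_nil _ (toWord_embA_ne_nil hp)] at ha
  exact isLeft_of_mem_toWord_embA (List.mem_of_mem_head? ha)

theorem eq_inr_of_mem_getLast?_blockWord {p : FreeGroup A × ℤ} (hp : p.2 ≠ 0)
    {a : (A ⊕ Unit) × Bool} (ha : a ∈ (blockWord p).getLast?) : a.1 = Sum.inr () := by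
  rw [blockWord, List.getLast?_append_of_ne_nil _ (toWord_xgen_zpow_ne_nil hp)] at ha
  exact eq_inr_of_mem_toWord_xgen_zpow (List.mem_of_mem_getLast? ha)

theorem blockProd_eq_mk (ps : List (FreeGroup A × ℤ)) :
    blockProd ps = mk (ps.map blockWord).flatten := by
  induction ps with
  | nil => rfl
  | cons p ps ih =>
    rw [blockProd_cons, ih, List.map_cons, List.flatten_cons, ← FreeGroup.mul_mk, blockWord,
      ← FreeGroup.mul_mk, FreeGroup.mk_toWord, FreeGroup.mk_toWord, block]

theorem toWord_blockProd {ps : List (FreeGroup A × ℤ)} (h₁ : ∀ p ∈ ps, p.1 ≠ 1)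
    (h₂ : ∀ p ∈ ps, p.2 ≠ 0) : (blockProd ps).toWord = (ps.map blockWord).flatten := by
  rw [blockProd_eq_mk, FreeGroup.toWord_mk]
  refine FreeGroup.IsReduced.reduce_eq ((List.isChain_flatten ?_).2 ⟨?_, ?_⟩)
  · simp only [List.mem_map, not_exists, not_and]
    exact fun p hp => blockWord_ne_nil (h₁ p hp)
  · simp only [List.forall_mem_map]
    exact fun p _ => isReduced_blockWord p
  · refine (List.isChain_map _).2 <| List.Pairwise.isChain <|
      List.pairwise_of_forall_mem_list fun p hp q hq a ha b hb hab => ?_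
    have hl := isLeft_of_mem_head?_blockWord (h₁ q hq) hb
    rw [← hab, eq_inr_of_mem_getLast?_blockWord (h₂ p hp) ha] at hl
    cases hl

theorem niceWord_blockProd (ρ : A → Equiv.Perm ℕ) {p : FreeGroup A × ℤ}
    {ps : List (FreeGroup A × ℤ)} (h₁ : ∀ q ∈ p :: ps, lift ρ q.1 ≠ 1)
    (h₂ : ∀ q ∈ p :: ps, q.2 ≠ 0) : NiceWord ρ (blockProd (p :: ps)) := by
  have hne : ∀ q ∈ p :: ps, q.1 ≠ 1 := fun q hq h => h₁ q hq (by rw [h, map_one])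
  refine Or.inr ⟨ps.length, fun i => ((p :: ps).get i).1, fun i => ((p :: ps).get i).2,
    fun i => h₁ _ (List.get_mem _ _), fun i => h₂ _ (List.get_mem _ _), ?_⟩
  rw [toWord_blockProd hne h₂]
  conv_lhs => rw [← List.ofFn_get (p :: ps), List.map_ofFn]
  rfl

end Words

section Representation

variable (ρ : A → Equiv.Perm ℕ) (f : Equiv.Perm ℕ)

theorem lift_extendRep_embA (u : FreeGroup A) : lift (extendRep ρ f) (embA A u) = lift ρ u := by
  have hcomp : (lift (extendRep ρ f)).comp (embA A) = lift ρ :=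
    FreeGroup.ext_hom _ _ fun a => by simp [embA, extendRep]
  exact DFunLike.congr_fun hcomp u

theorem lift_extendRep_xgen : lift (extendRep ρ f) (xgen A) = f := by
  simp [xgen, extendRep]

theorem lift_extendRep_block (p : FreeGroup A × ℤ) :
    lift (extendRep ρ f) (block p) = lift ρ p.1 * f ^ p.2 := by
  rw [block, map_mul, map_zpow, lift_extendRep_embA, lift_extendRep_xgen]

theorem isIdOrCofinitary_lift_blockProd_append_comm (ps qs : List (FreeGroup A × ℤ)) :
    (lift (extendRep ρ f) (blockProd (ps ++ qs))).IsIdOrCofinitary ↔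
      (lift (extendRep ρ f) (blockProd (qs ++ ps))).IsIdOrCofinitary := by
  simp only [blockProd_append, map_mul]
  exact isIdOrCofinitary_mul_comm

variable {ρ f} [DecidableEq A]

theorem isIdOrCofinitary_lift_blockProd_cons (hρ : IsCofinitaryRep ρ)
    (hnice : ∀ w : FreeGroup (A ⊕ Unit), NiceWord ρ w →
      (Function.fixedPoints ⇑(lift (extendRep ρ f) w)).Finite)
    {p : FreeGroup A × ℤ} (hp : lift ρ p.1 ≠ 1 → p.2 = 0) (ps : List (FreeGroup A × ℤ))
    (ih : ∀ qs : List (FreeGroup A × ℤ), qs.length ≤ ps.length →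
      (lift (extendRep ρ f) (blockProd qs)).IsIdOrCofinitary) :
    (lift (extendRep ρ f) (blockProd (p :: ps))).IsIdOrCofinitary := by
  by_cases hu : lift ρ p.1 = 1
  · rw [blockProd_cons, map_mul, lift_extendRep_block, hu, one_mul, isIdOrCofinitary_mul_comm]
    rcases List.eq_nil_or_concat ps with rfl | ⟨ps', r, rfl⟩
    · rw [blockProd_nil, map_one, one_mul]
      by_cases hk : p.2 = 0
      · exact Or.inl (by rw [hk, zpow_zero])
      · refine Or.inr ?_
        simpa [lift_extendRep_xgen] using hnice _ (Or.inl ⟨p.2, hk, rfl⟩)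
    · have hmerge : lift (extendRep ρ f) (blockProd (ps'.concat r)) * f ^ p.2 =
          lift (extendRep ρ f) (blockProd (ps' ++ [(r.1, r.2 + p.2)])) := by
        simp [lift_extendRep_block, zpow_add, mul_assoc]
      rw [hmerge]
      exact ih _ (by simp)
  · have hk := hp hu
    rcases ps with _ | ⟨q, ps⟩
    · simp only [blockProd_cons, blockProd_nil, mul_one, lift_extendRep_block, hk, zpow_zero]
      exact hρ p.1
    · rw [blockProd_cons, blockProd_cons, ← mul_assoc, block_mul_block_of_snd_eq_zero hk,
        ← blockProd_cons]
      exact ih _ (by simp)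

theorem isIdOrCofinitary_lift_blockProd (hρ : IsCofinitaryRep ρ)
    (hnice : ∀ w : FreeGroup (A ⊕ Unit), NiceWord ρ w →
      (Function.fixedPoints ⇑(lift (extendRep ρ f) w)).Finite)
    (ps : List (FreeGroup A × ℤ)) :
    (lift (extendRep ρ f) (blockProd ps)).IsIdOrCofinitary := by
  by_cases hgood : ∀ p ∈ ps, lift ρ p.1 ≠ 1 ∧ p.2 ≠ 0
  · rcases ps with _ | ⟨p, ps⟩
    · exact Or.inl (by rw [blockProd_nil, map_one])
    · exact Or.inr (hnice _ (niceWord_blockProd ρ (fun q hq => (hgood q hq).1)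
        fun q hq => (hgood q hq).2))
  push Not at hgood
  obtain ⟨p, hp, hbad⟩ := hgood
  obtain ⟨ps₁, ps₂, hps⟩ := List.append_of_mem hp
  rw [hps, isIdOrCofinitary_lift_blockProd_append_comm, List.cons_append]
  exact isIdOrCofinitary_lift_blockProd_cons hρ hnice hbad _ fun qs hqs =>
    isIdOrCofinitary_lift_blockProd hρ hnice qs
termination_by ps.length
decreasing_by simp only [hps, List.length_append, List.length_cons] at hqs ⊢; omega

end Representation

end Blocks

/-- If `ρ` induces a cofinitary representation and `fix(ρ[f]̂(w))` is finite for every nice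
word `w` with respect to `ρ`, then `ρ[f]` induces a cofinitary representation: every
element of the range of `ρ[f]̂ : F_{A ∪ {x}} → Sym(ℕ)` is the identity or has only
finitely many fixed points. -/
theorem cofinitary_of_nice_words {A : Type*} [DecidableEq A] (ρ : A → Equiv.Perm ℕ)
    (hρ : IsCofinitaryRep ρ) (f : Equiv.Perm ℕ)
    (hnice : ∀ w : FreeGroup (A ⊕ Unit), NiceWord ρ w →
      (Function.fixedPoints ⇑(FreeGroup.lift (extendRep ρ f) w)).Finite) :
    ∀ w : FreeGroup (A ⊕ Unit),
      FreeGroup.lift (extendRep ρ f) w = 1 ∨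
      (Function.fixedPoints ⇑(FreeGroup.lift (extendRep ρ f) w)).Finite := by
  intro w
  obtain ⟨ps, rfl⟩ := exists_blockProd_eq w
  exact isIdOrCofinitary_lift_blockProd hρ hnice ps
end
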